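/- Forced terminal value of the singular linear ODE (from the Remark after Theorem 4.14): Let T > 0, let λ : [0,T) → [0,∞) be continuous with ∫_0^t λ(s) ds → +∞ as t → T⁻, and let ξ : [0,T] → ℝ be bounded and continuously differentiable. Then every differentiable function x : [0,T) → ℝ satisfying x′(t) = λ(t)·(e^{ξ(t)} − x(t)) for all t ∈ [0,T) satisfies lim_{t → T⁻} x(t) = e^{ξ(T)}. In particular, the terminal value problem x′ = λ(e^{ξ} − x) on [0,T) with lim_{t→T⁻} x(t) = B has a solution if and only if B = e^{ξ(T)}. -/

import Mathlib

open MeasureTheory Filter Topology Set Real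

/-! Writing `y := e^ξ - x`, the equation becomes `y' = h - λ y` with `h := ξ' e^ξ` bounded, and
variation of constants gives `y t = e^{Λ₀ - Λₜ} y 0 + e^{-Λₜ} ∫₀ᵗ h e^{Λ}`. The first term vanishes
since `Λₜ → ∞`. In the second, `Λ` is monotone, so the integral over `[t₀, t]` is at most
`M e^{Λₜ} (t - t₀)`; hence the term is eventually below `ε + M (T - t₀)` for every `t₀ < T`.
The second term alone (`y 0 = 0`) is a solution, which gives existence for `B = e^{ξ T}`. -/

section

variable {a b : ℝ}

theorem hasDerivWithinAt_integral_Ico {f : ℝ → ℝ} (hf : ContinuousOn f (Ico a b)) {t : ℝ}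
    (ht : t ∈ Ico a b) :
    HasDerivWithinAt (fun u => ∫ s in a..u, f s) (f t) (Ico a b) t := by
  obtain ⟨c, htc, hcb⟩ := exists_between ht.2
  have hf' : ContinuousOn f (Icc a c) := hf.mono (Icc_subset_Ico_right hcb)
  have : Fact (t ∈ Icc a c) := ⟨⟨ht.1, htc.le⟩⟩
  refine (intervalIntegral.integral_hasDerivWithinAt_right (s := Icc a c)
      ((hf'.mono (Icc_subset_Icc_right htc.le)).intervalIntegrable_of_Icc ht.1)
      (hf'.stronglyMeasurableAtFilter_nhdsWithin measurableSet_Icc t)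
      (hf' t this.out)).mono_of_mem_nhdsWithin ?_
  exact mem_nhdsWithin.2 ⟨Iio c, isOpen_Iio, htc, fun u hu => ⟨hu.2.1, hu.1.le⟩⟩

theorem eq_of_hasDerivWithinAt_zero_Ico {φ : ℝ → ℝ}
    (hφ : ∀ t ∈ Ico a b, HasDerivWithinAt φ 0 (Ico a b) t) {t : ℝ} (ht : t ∈ Ico a b) :
    φ t = φ a := by
  have hsub : Icc a t ⊆ Ico a b := Icc_subset_Ico_right ht.2
  refine constant_of_has_deriv_right_zero
    (fun s hs => (hφ s (hsub hs)).continuousWithinAt.mono hsub)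
    (fun s hs => (hφ s (hsub (Ico_subset_Icc_self hs))).mono_of_mem_nhdsWithin ?_)
    t (right_mem_Icc.2 ht.1)
  exact Ico_mem_nhdsGE_of_mem ⟨hs.1, hs.2.trans ht.2⟩

noncomputable def duhamel (Lam h : ℝ → ℝ) (a t : ℝ) : ℝ :=
  exp (-Lam t) * ∫ s in a..t, h s * exp (Lam s)

variable {Lam lam h y : ℝ → ℝ}

theorem hasDerivWithinAt_duhamel
    (hLam : ∀ t ∈ Ico a b, HasDerivWithinAt Lam (lam t) (Ico a b) t)
    (hh : ContinuousOn h (Ico a b)) {t : ℝ} (ht : t ∈ Ico a b) :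
    HasDerivWithinAt (duhamel Lam h a) (h t - lam t * duhamel Lam h a t) (Ico a b) t := by
  have hLam_cont : ContinuousOn Lam (Ico a b) := fun s hs => (hLam s hs).continuousWithinAt
  have hJ := hasDerivWithinAt_integral_Ico (hh.mul hLam_cont.rexp) ht
  refine ((hLam t ht).neg.exp.mul hJ).congr_deriv ?_
  simp only [duhamel, Pi.mul_apply, Pi.neg_apply, exp_neg]
  field_simp
  ring

theorem eq_exp_sub_mul_add_duhamel
    (hLam : ∀ t ∈ Ico a b, HasDerivWithinAt Lam (lam t) (Ico a b) t)
    (hh : ContinuousOn h (Ico a b))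
    (hy : ∀ t ∈ Ico a b, HasDerivWithinAt y (h t - lam t * y t) (Ico a b) t)
    {t : ℝ} (ht : t ∈ Ico a b) :
    y t = exp (Lam a - Lam t) * y a + duhamel Lam h a t := by
  have hLam_cont : ContinuousOn Lam (Ico a b) := fun s hs => (hLam s hs).continuousWithinAt
  have hconst : ∀ s ∈ Ico a b, HasDerivWithinAt
      (fun u => exp (Lam u) * y u - ∫ r in a..u, h r * exp (Lam r)) 0 (Ico a b) s := by
    intro s hs
    refine (((hLam s hs).exp.mul (hy s hs)).sub
      (hasDerivWithinAt_integral_Ico (hh.mul hLam_cont.rexp) hs)).congr_deriv ?_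
    simp only [Pi.mul_apply]
    ring
  have key := eq_of_hasDerivWithinAt_zero_Ico hconst ht
  simp only [intervalIntegral.integral_same, sub_zero] at key
  rw [duhamel, exp_sub, exp_neg]
  field_simp
  linear_combination key

theorem tendsto_duhamel_nhdsLT_zero (hab : a < b) (hLam_cont : ContinuousOn Lam (Ico a b))
    (hLam_mono : MonotoneOn Lam (Ico a b)) (hLam_top : Tendsto Lam (𝓝[<] b) atTop)
    (hh : ContinuousOn h (Ico a b)) {M : ℝ} (hM : ∀ t ∈ Ico a b, ‖h t‖ ≤ M) :
    Tendsto (duhamel Lam h a) (𝓝[<] b) (𝓝 0) := by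
  have hg : ContinuousOn (fun s => h s * exp (Lam s)) (Ico a b) := hh.mul hLam_cont.rexp
  rw [Metric.tendsto_nhds]
  intro ε hε
  obtain ⟨t₀, ht₀, hMt₀⟩ : ∃ t₀ ∈ Ico a b, M * (b - t₀) < ε / 2 := by
    have hlim : Tendsto (fun t₀ => M * (b - t₀)) (𝓝[<] b) (𝓝 0) := by
      have : Tendsto (fun t₀ => M * (b - t₀)) (𝓝 b) (𝓝 (M * (b - b))) :=
        ((continuous_const.sub continuous_id).const_mul M).tendsto b
      simpa using this.mono_left nhdsWithin_le_nhds
    exact (Filter.Eventually.and (Ico_mem_nhdsLT hab) (hlim.eventually (gt_mem_nhds (half_pos hε)))).exists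
  have hM₀ : 0 ≤ M := (norm_nonneg _).trans (hM t₀ ht₀)
  set C := |∫ s in a..t₀, h s * exp (Lam s)|
  have hsmall : ∀ᶠ t in 𝓝[<] b, exp (-Lam t) * C < ε / 2 := by
    have := (tendsto_exp_neg_atTop_nhds_zero.comp hLam_top).mul_const C
    rw [zero_mul] at this
    exact this.eventually (gt_mem_nhds (half_pos hε))
  filter_upwards [Ioo_mem_nhdsLT ht₀.2, hsmall] with t ht hCt
  have hsub₀ : Icc a t₀ ⊆ Ico a b := Icc_subset_Ico_right ht₀.2
  have hsub : Icc t₀ t ⊆ Ico a b := Icc_subset_Ico ht₀.1 ht.2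
  have htail : ‖∫ s in t₀..t, h s * exp (Lam s)‖ ≤ M * exp (Lam t) * |t - t₀| := by
    refine intervalIntegral.norm_integral_le_of_norm_le_const fun s hs => ?_
    rw [uIoc_of_le ht.1.le] at hs
    have hs' : s ∈ Ico a b := hsub (Ioc_subset_Icc_self hs)
    rw [norm_mul, norm_of_nonneg (exp_pos _).le]
    exact mul_le_mul (hM s hs') (exp_le_exp.2 (hLam_mono hs' (hsub (right_mem_Icc.2 ht.1.le)) hs.2))
      (exp_pos _).le hM₀
  rw [dist_zero_right, duhamel, ← intervalIntegral.integral_add_adjacent_intervals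
    ((hg.mono hsub₀).intervalIntegrable_of_Icc ht₀.1)
    ((hg.mono hsub).intervalIntegrable_of_Icc ht.1.le), norm_mul, norm_of_nonneg (exp_pos _).le]
  calc exp (-Lam t) * ‖(∫ s in a..t₀, h s * exp (Lam s)) + ∫ s in t₀..t, h s * exp (Lam s)‖
      ≤ exp (-Lam t) * (C + M * exp (Lam t) * |t - t₀|) := by
        gcongr
        exact (norm_add_le _ _).trans (add_le_add le_rfl htail)
    _ = exp (-Lam t) * C + M * (t - t₀) := by
        rw [abs_of_pos (sub_pos.2 ht.1), exp_neg]
        field_simp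
    _ < ε := by nlinarith [ht.2]

theorem tendsto_nhdsLT_zero_of_hasDerivWithinAt (hab : a < b)
    (hLam : ∀ t ∈ Ico a b, HasDerivWithinAt Lam (lam t) (Ico a b) t)
    (hlam : ∀ t ∈ Ico a b, 0 ≤ lam t) (hLam_top : Tendsto Lam (𝓝[<] b) atTop)
    (hh : ContinuousOn h (Ico a b)) {M : ℝ} (hM : ∀ t ∈ Ico a b, ‖h t‖ ≤ M)
    (hy : ∀ t ∈ Ico a b, HasDerivWithinAt y (h t - lam t * y t) (Ico a b) t) :
    Tendsto y (𝓝[<] b) (𝓝 0) := by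
  have hLam_cont : ContinuousOn Lam (Ico a b) := fun s hs => (hLam s hs).continuousWithinAt
  have hLam_mono : MonotoneOn Lam (Ico a b) :=
    monotoneOn_of_hasDerivWithinAt_nonneg (convex_Ico a b) hLam_cont
      (fun t ht => (hLam t (interior_subset ht)).mono interior_subset)
      (fun t ht => hlam t (interior_subset ht))
  have hfree : Tendsto (fun t => exp (Lam a - Lam t) * y a) (𝓝[<] b) (𝓝 0) := by
    have hexp := tendsto_exp_atBot.comp
      (tendsto_atBot_add_const_left _ (Lam a) (tendsto_neg_atTop_atBot.comp hLam_top))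
    simpa [sub_eq_add_neg] using hexp.mul_const (y a)
  have hsum := hfree.add (tendsto_duhamel_nhdsLT_zero hab hLam_cont hLam_mono hLam_top hh hM)
  rw [add_zero] at hsum
  refine hsum.congr' ?_
  filter_upwards [Ico_mem_nhdsLT hab] with t ht
  exact (eq_exp_sub_mul_add_duhamel hLam hh hy ht).symm

end

theorem stmt_8_general (T : ℝ) (hT : 0 < T) (lam : ℝ → ℝ)
    (hlam_cont : ContinuousOn lam (Set.Ico 0 T))
    (hlam_nonneg : ∀ t ∈ Set.Ico (0 : ℝ) T, 0 ≤ lam t)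
    (hdiv : Tendsto (fun t => ∫ s in (0 : ℝ)..t, lam s) (nhdsWithin T (Set.Iio T)) atTop)
    (xi xi' : ℝ → ℝ)
    (hxi'cont : ContinuousOn xi' (Set.Icc 0 T))
    (hxi_deriv : ∀ t ∈ Set.Icc (0 : ℝ) T, HasDerivWithinAt xi (xi' t) (Set.Icc 0 T) t) :
    (∀ x : ℝ → ℝ,
      (∀ t ∈ Set.Ico (0 : ℝ) T,
          HasDerivWithinAt x (lam t * (Real.exp (xi t) - x t)) (Set.Ico 0 T) t) →
      Tendsto x (nhdsWithin T (Set.Iio T)) (nhds (Real.exp (xi T)))) ∧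
    (∀ B : ℝ,
      (∃ x : ℝ → ℝ,
        (∀ t ∈ Set.Ico (0 : ℝ) T,
            HasDerivWithinAt x (lam t * (Real.exp (xi t) - x t)) (Set.Ico 0 T) t) ∧
        Tendsto x (nhdsWithin T (Set.Iio T)) (nhds B)) ↔ B = Real.exp (xi T)) := by
  set Lam : ℝ → ℝ := fun t => ∫ s in (0 : ℝ)..t, lam s
  have hLam : ∀ t ∈ Ico 0 T, HasDerivWithinAt Lam (lam t) (Ico 0 T) t :=
    fun t ht => hasDerivWithinAt_integral_Ico hlam_cont ht
  have hxi : ∀ t ∈ Ico 0 T, HasDerivWithinAt xi (xi' t) (Ico 0 T) t :=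
    fun t ht => (hxi_deriv t (Ico_subset_Icc_self ht)).mono Ico_subset_Icc_self
  have hxi_cont : ContinuousOn xi (Icc 0 T) := fun t ht => (hxi_deriv t ht).continuousWithinAt
  set h : ℝ → ℝ := fun t => xi' t * exp (xi t)
  have hh : ContinuousOn h (Icc 0 T) := hxi'cont.mul hxi_cont.rexp
  obtain ⟨M, hM⟩ := isCompact_Icc.exists_bound_of_continuousOn hh
  have hexp_xi : Tendsto (fun t => exp (xi t)) (𝓝[<] T) (𝓝 (exp (xi T))) :=
    ((hxi_cont T (right_mem_Icc.2 hT.le)).mono_of_mem_nhdsWithin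
      (mem_of_superset (Ico_mem_nhdsLT hT) Ico_subset_Icc_self)).tendsto.rexp
  have hlimit : ∀ x : ℝ → ℝ, (∀ t ∈ Ico 0 T,
      HasDerivWithinAt x (lam t * (exp (xi t) - x t)) (Ico 0 T) t) →
      Tendsto x (𝓝[<] T) (𝓝 (exp (xi T))) := by
    intro x hx
    have hgap : Tendsto (fun t => exp (xi t) - x t) (𝓝[<] T) (𝓝 0) :=
      tendsto_nhdsLT_zero_of_hasDerivWithinAt hT hLam hlam_nonneg hdiv
        (hh.mono Ico_subset_Icc_self) (fun t ht => hM t (Ico_subset_Icc_self ht))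
        (fun t ht => ((hxi t ht).exp.sub (hx t ht)).congr_deriv (by ring))
    simpa using hexp_xi.sub hgap
  refine ⟨hlimit, fun B => ⟨fun ⟨x, hx, hB⟩ => tendsto_nhds_unique hB (hlimit x hx), ?_⟩⟩
  rintro rfl
  have hx : ∀ t ∈ Ico 0 T, HasDerivWithinAt (fun u => exp (xi u) - duhamel Lam h 0 u)
      (lam t * (exp (xi t) - (exp (xi t) - duhamel Lam h 0 t))) (Ico 0 T) t := fun t ht =>
    ((hxi t ht).exp.sub (hasDerivWithinAt_duhamel hLam (hh.mono Ico_subset_Icc_self) ht)).congr_deriv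
      (by ring)
  exact ⟨_, hx, hlimit _ hx⟩

/-- Forced terminal value of the singular linear ODE: when Λ_t = ∫_0^t λ → ∞ as t → T⁻
and ξ is bounded and continuously differentiable on [0,T], every solution of
x′ = λ(e^ξ − x) on [0,T) satisfies x(t) → e^{ξ(T)} as t → T⁻; in particular the terminal
value problem with prescribed limit B is solvable iff B = e^{ξ(T)}. -/
theorem stmt_8 (T : ℝ) (hT : 0 < T) (lam : ℝ → ℝ)
    (hlam_cont : ContinuousOn lam (Set.Ico 0 T))
    (hlam_nonneg : ∀ t ∈ Set.Ico (0 : ℝ) T, 0 ≤ lam t)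
    (hdiv : Tendsto (fun t => ∫ s in (0 : ℝ)..t, lam s) (nhdsWithin T (Set.Iio T)) atTop)
    (xi xi' : ℝ → ℝ)
    (hxibdd : ∃ K, ∀ t ∈ Set.Icc (0 : ℝ) T, |xi t| ≤ K)
    (hxi'cont : ContinuousOn xi' (Set.Icc 0 T))
    (hxi_deriv : ∀ t ∈ Set.Icc (0 : ℝ) T, HasDerivWithinAt xi (xi' t) (Set.Icc 0 T) t) :
    (∀ x : ℝ → ℝ,
      (∀ t ∈ Set.Ico (0 : ℝ) T,
          HasDerivWithinAt x (lam t * (Real.exp (xi t) - x t)) (Set.Ico 0 T) t) →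
      Tendsto x (nhdsWithin T (Set.Iio T)) (nhds (Real.exp (xi T)))) ∧
    (∀ B : ℝ,
      (∃ x : ℝ → ℝ,
        (∀ t ∈ Set.Ico (0 : ℝ) T,
            HasDerivWithinAt x (lam t * (Real.exp (xi t) - x t)) (Set.Ico 0 T) t) ∧
        Tendsto x (nhdsWithin T (Set.Iio T)) (nhds B)) ↔ B = Real.exp (xi T)) :=
  stmt_8_general T hT lam hlam_cont hlam_nonneg hdiv xi xi' hxi'cont hxi_deriv
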